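/- arXiv:quant-ph/0412067 — 6 statements merged into one kernel-verified Lean document; each statement's English description precedes it below -/
import Mathlib

section
/- Let a₁, …, aₙ be non-negative integers with n ≥ 2, and let d = gcd(a₁+1, …, aₙ+1). Then there exist polynomials s₁, …, sₙ ∈ ℤ[x] such that ∑ᵢ sᵢ(x)·(1 + x + ⋯ + x^{aᵢ}) = 1 + x + ⋯ + x^{d-1}. -/
open Polynomial

noncomputable def Fgeo (m : ℕ) : ℤ[X] := ∑ j ∈ Finset.range m, X ^ j

lemma Fgeo_add (k m : ℕ) : Fgeo (k + m) = Fgeo k + X ^ k * Fgeo m := by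
  simp [Fgeo, Finset.sum_range_add, Finset.mul_sum, pow_add]

lemma Fgeo_div (m q r : ℕ) :
    Fgeo (m * q + r) = Fgeo r + X ^ r * (∑ i ∈ Finset.range q, X ^ (m * i)) * Fgeo m := by
  induction q with
  | zero => simp
  | succ q ih =>
    have h : m * (q + 1) + r = (m * q + r) + m := by ring
    rw [h, Fgeo_add, ih, Finset.sum_range_succ]
    have hx : (X : ℤ[X]) ^ (m * q + r) = X ^ r * X ^ (m * q) := by
      rw [← pow_add]; ring_nf
    rw [hx]; ring

lemma Fgeo_gcd_pair (m n : ℕ) : ∃ u v : ℤ[X], u * Fgeo m + v * Fgeo n = Fgeo (Nat.gcd m n) := by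
  induction m using Nat.strong_induction_on generalizing n with
  | _ m ih =>
    match m with
    | 0 => exact ⟨0, 1, by simp⟩
    | m + 1 =>
      obtain ⟨u, v, huv⟩ := ih (n % (m + 1)) (Nat.mod_lt n (Nat.succ_pos m)) (m + 1)
      have hn : Fgeo n = Fgeo (n % (m + 1)) +
          X ^ (n % (m + 1)) * (∑ i ∈ Finset.range (n / (m + 1)), X ^ ((m + 1) * i)) * Fgeo (m + 1) := by
        conv_lhs => rw [← Nat.div_add_mod n (m + 1)]
        exact Fgeo_div _ _ _
      refine ⟨v - u * (X ^ (n % (m + 1)) * (∑ i ∈ Finset.range (n / (m + 1)), X ^ ((m + 1) * i))),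
        u, ?_⟩
      rw [Nat.gcd_rec, ← huv, hn]; ring

lemma Fgeo_gcd_finset (n : ℕ) (a : Fin n → ℕ) (t : Finset (Fin n)) :
    ∃ s : Fin n → ℤ[X], ∑ i ∈ t, s i * Fgeo (a i + 1) = Fgeo (t.gcd fun i => a i + 1) := by
  induction t using Finset.induction with
  | empty => exact ⟨0, by simp [Fgeo]⟩
  | @insert i t hi ih =>
    obtain ⟨s, hs⟩ := ih
    obtain ⟨u, v, huv⟩ := Fgeo_gcd_pair (a i + 1) (t.gcd fun i => a i + 1)
    refine ⟨fun j => if j = i then u else v * s j, ?_⟩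
    rw [Finset.sum_insert hi]
    have h1 : ∑ j ∈ t, (if j = i then u else v * s j) * Fgeo (a j + 1)
        = v * ∑ j ∈ t, s j * Fgeo (a j + 1) := by
      rw [Finset.mul_sum]
      refine Finset.sum_congr rfl fun j hj => ?_
      rw [if_neg (by rintro rfl; exact hi hj)]; ring
    simp only [h1, hs, if_pos rfl, Finset.gcd_insert]
    exact huv

theorem geom_sum_gcd_combination (n : ℕ) (hn : 2 ≤ n) (a : Fin n → ℕ)
    (d : ℕ) (hd : d = Finset.univ.gcd (fun i => a i + 1)) :
    ∃ s : Fin n → ℤ[X],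
      ∑ i, s i * (∑ j ∈ Finset.range (a i + 1), X ^ j) =
        ∑ j ∈ Finset.range d, X ^ j := by
  obtain ⟨s, hs⟩ := Fgeo_gcd_finset n a Finset.univ
  exact ⟨s, by simpa [Fgeo, hd] using hs⟩
end

section
/- If p₁, …, pₙ are distinct primes, m = p₁⋯pₙ and mᵢ = m/pᵢ, then there exist polynomials s₁, …, sₙ ∈ ℤ[x] with ∑ᵢ sᵢ(x)·F_{mᵢ}(x) = 1, where F_k(x) = 1 + x + ⋯ + x^{k-1}. -/
/-! Let `I ⊆ ℤ[X]` be the ideal generated by the `F_{mᵢ}`. Since `F_{a+b} = F_a + X^a F_b`, the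
set of `k` with `F_k ∈ I` is closed under addition and under cancelling a summand, hence under
the Euclidean algorithm, so it contains `gcd(m₁, …, mₙ) = 1`; thus `1 = F_1 ∈ I`. -/

open Finset Polynomial

theorem geom_sum_range_add {R : Type*} [Semiring R] (x : R) (a b : ℕ) :
    ∑ i ∈ range (a + b), x ^ i = ∑ i ∈ range a, x ^ i + x ^ a * ∑ i ∈ range b, x ^ i := by
  rw [sum_range_add, mul_sum]
  simp only [pow_add]

namespace Ideal

variable {R : Type*} [CommRing R] {I : Ideal R} {x : R} {a b : ℕ}

theorem geom_sum_add_mem (ha : ∑ i ∈ range a, x ^ i ∈ I) (hb : ∑ i ∈ range b, x ^ i ∈ I) :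
    ∑ i ∈ range (a + b), x ^ i ∈ I := by
  rw [geom_sum_range_add]
  exact I.add_mem ha (I.mul_mem_left _ hb)

theorem geom_sum_mem_of_add_mem (hb : ∑ i ∈ range b, x ^ i ∈ I)
    (hab : ∑ i ∈ range (a + b), x ^ i ∈ I) : ∑ i ∈ range a, x ^ i ∈ I := by
  rw [geom_sum_range_add] at hab
  simpa using I.sub_mem hab (I.mul_mem_left (x ^ a) hb)

theorem geom_sum_mul_mem (ha : ∑ i ∈ range a, x ^ i ∈ I) (q : ℕ) :
    ∑ i ∈ range (a * q), x ^ i ∈ I := by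
  induction q with
  | zero => simp
  | succ q ih => simpa only [Nat.mul_succ] using geom_sum_add_mem ih ha

theorem geom_sum_mod_mem (ha : ∑ i ∈ range a, x ^ i ∈ I) (hb : ∑ i ∈ range b, x ^ i ∈ I) :
    ∑ i ∈ range (b % a), x ^ i ∈ I :=
  geom_sum_mem_of_add_mem (geom_sum_mul_mem ha (b / a)) (by rwa [Nat.mod_add_div])

theorem geom_sum_gcd_mem (ha : ∑ i ∈ range a, x ^ i ∈ I) (hb : ∑ i ∈ range b, x ^ i ∈ I) :
    ∑ i ∈ range (Nat.gcd a b), x ^ i ∈ I := by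
  induction a, b using Nat.gcd.induction with
  | H0 b => simpa using hb
  | H1 a b _ ih =>
    rw [Nat.gcd_rec]
    exact ih (geom_sum_mod_mem ha hb) ha

theorem geom_sum_finset_gcd_mem {ι : Type*} (s : Finset ι) (f : ι → ℕ)
    (h : ∀ i ∈ s, ∑ j ∈ range (f i), x ^ j ∈ I) : ∑ j ∈ range (s.gcd f), x ^ j ∈ I := by
  classical
  induction s using Finset.induction_on with
  | empty => simp
  | insert i s _ ih =>
    rw [Finset.gcd_insert]
    exact geom_sum_gcd_mem (h i (mem_insert_self i s))
      (ih fun j hj => h j (mem_insert_of_mem hj))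

end Ideal

theorem Nat.gcd_prod_erase_eq_one_of_injective_prime {ι : Type*} [Fintype ι] [DecidableEq ι]
    [Nonempty ι] {p : ι → ℕ} (hp : ∀ i, (p i).Prime) (hinj : Function.Injective p) :
    univ.gcd (fun i => ∏ j ∈ univ.erase i, p j) = 1 := by
  refine Nat.eq_one_iff_not_exists_prime_dvd.mpr fun q hq hdvd => ?_
  have hdvd_erase : ∀ i, q ∣ ∏ j ∈ univ.erase i, p j := fun i =>
    Finset.dvd_gcd_iff.mp hdvd i (mem_univ i)
  have eq_of_dvd_erase : ∀ i, ∃ j ≠ i, q = p j := fun i => by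
    obtain ⟨j, hj, hqj⟩ := hq.prime.exists_mem_finset_dvd (hdvd_erase i)
    exact ⟨j, ne_of_mem_erase hj, (Nat.prime_dvd_prime_iff_eq hq (hp j)).mp hqj⟩
  obtain ⟨j, -, rfl⟩ := eq_of_dvd_erase (Classical.arbitrary ι)
  obtain ⟨k, hkj, hqk⟩ := eq_of_dvd_erase j
  exact hkj (hinj hqk).symm

theorem geom_sum_coprime_combination (n : ℕ) (hn : 0 < n) (p : Fin n → ℕ)
    (hp : ∀ i, (p i).Prime) (hdist : Function.Injective p)
    (m : ℕ) (hm : m = ∏ i, p i) :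
    ∃ s : Fin n → ℤ[X],
      ∑ i, s i * (∑ j ∈ Finset.range (m / p i), X ^ j) = 1 := by
  have : Nonempty (Fin n) := ⟨⟨0, hn⟩⟩
  have hmi : ∀ i, m / p i = ∏ j ∈ univ.erase i, p j := fun i =>
    Nat.div_eq_of_eq_mul_left (hp i).pos (by rw [prod_erase_mul _ _ (mem_univ i), hm])
  set I : Ideal ℤ[X] := Ideal.span (Set.range fun i => ∑ j ∈ range (m / p i), (X : ℤ[X]) ^ j)
  have hone : (1 : ℤ[X]) ∈ I := by
    have hgcd := Ideal.geom_sum_finset_gcd_mem (I := I) univ (fun i => m / p i)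
      fun i _ => Ideal.subset_span ⟨i, rfl⟩
    simp_rw [hmi, Nat.gcd_prod_erase_eq_one_of_injective_prime hp hdist] at hgcd
    simpa using hgcd
  exact (Submodule.mem_span_range_iff_exists_fun ℤ[X]).mp hone
end

section
/- Let n = p^α with p prime and α ≥ 1. If g ∈ ℤ[x] has degree n − 1, non-negative coefficients, and is divisible by Φ_n, then g(x) = s(x)·Φ_p(x^{n/p}) for some s ∈ ℤ[x] with non-negative coefficients. -/
open Polynomial Finset

theorem nonneg_multiple_of_cyclotomic_prime_pow (p α : ℕ) (hp : p.Prime)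
    (hα : 1 ≤ α) (n : ℕ) (hn : n = p ^ α) (g : ℤ[X])
    (hdeg : g.natDegree = n - 1) (hpos : ∀ i, 0 ≤ g.coeff i)
    (hdvd : cyclotomic n ℤ ∣ g) :
    ∃ s : ℤ[X], (∀ i, 0 ≤ s.coeff i) ∧
      g = s * (cyclotomic p ℤ).comp (X ^ (n / p)) := by
  haveI : Fact p.Prime := ⟨hp⟩
  obtain ⟨s, hs⟩ := hdvd
  set m := p ^ (α - 1) with hm
  have hp1 : 1 < p := hp.one_lt
  have hnp : n / p = m := by
    have h := Nat.pow_div (x := p) hα hp.pos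
    rw [pow_one] at h
    rw [hn, hm, h]
  have hΦ : cyclotomic n ℤ = ∑ j ∈ range p, X ^ (m * j) := by
    have : n = p ^ ((α - 1) + 1) := by rw [hn]; congr 1; omega
    rw [this, cyclotomic_prime_pow_eq_geom_sum hp]
    simp [← pow_mul, hm]
  have hcomp : (cyclotomic p ℤ).comp (X ^ (n / p)) = ∑ j ∈ range p, X ^ (m * j) := by
    rw [hnp, cyclotomic_prime ℤ p]
    simp [Polynomial.sum_comp, ← pow_mul, mul_comm]
  have hm1 : 1 ≤ m := Nat.one_le_pow _ _ hp.pos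
  have hmn : m * p = n := by rw [hm, hn, ← pow_succ]; congr 1; omega
  -- coefficients of g
  have hg : g = s * ∑ j ∈ range p, X ^ (m * j) := by
    rw [hs, hΦ, mul_comm]
  have hcoeff : ∀ i, i < m → g.coeff i = s.coeff i := by
    intro i hi
    rw [hg, mul_sum, finset_sum_coeff]
    rw [Finset.sum_eq_single 0]
    · simp
    · intro j _ hj
      rw [coeff_mul_X_pow']
      have : ¬ m * j ≤ i := by
        have : m ≤ m * j := Nat.le_mul_of_pos_right m (Nat.pos_of_ne_zero hj)
        omega
      simp [this]
    · intro h; simp at h; exact absurd hp.pos (by omega)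
  refine ⟨s, ?_, by rw [hcomp, ← hg]⟩
  intro i
  by_cases hi : i < m
  · rw [← hcoeff i hi]; exact hpos i
  · -- i ≥ m : s.coeff i = 0
    rcases eq_or_ne s 0 with rfl | hs0
    · simp
    have hgne : g ≠ 0 := by
      rw [hg]
      refine mul_ne_zero hs0 ?_
      rw [← hΦ]
      exact cyclotomic_ne_zero n ℤ
    have hdegΦ : (cyclotomic n ℤ).natDegree = n - m := by
      rw [natDegree_cyclotomic, hn, Nat.totient_prime_pow hp (by omega), ← hm]
      have h2 : m * (p - 1) + m = m * (p - 1 + 1) := (Nat.mul_succ _ _).symm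
      rw [show p - 1 + 1 = p by omega, hmn] at h2
      omega
    have hds : s.natDegree = m - 1 := by
      have := natDegree_mul (cyclotomic_ne_zero n ℤ) hs0
      rw [← hs, hdeg, hdegΦ] at this
      have hmn' : m ≤ n := by nlinarith
      omega
    have : s.natDegree < i := by omega
    rw [coeff_eq_zero_of_natDegree_lt this]
end

section
/- Let n = p^α q^β with p, q distinct primes, α ≥ 1, β ≥ 1. If g ∈ ℤ[x] has degree n − 1, non-negative coefficients, and Φ_n divides g, then there exist s₁, s₂ ∈ ℤ[x] with non-negative coefficients such that g(x) = s₁(x)·Φ_p(x^{n/p}) + s₂(x)·Φ_q(x^{n/q}). -/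
/-!
Read the coefficients of `g` cyclically, `c i = g.coeff (i % n)`, and put `u = n / p`, `v = n / q`.
Every proper divisor of `n` divides `u` or `v`, so an `n`-th root of unity `ω` is either primitive,
and then `g(ω) = 0`, or satisfies `ω ^ u = 1` or `ω ^ v = 1`. The second difference
`c i - c (i + u) - c (i + v) + c (i + u + v)`, read as a polynomial of degree `< n`, takes at `ω`
a multiple of the value `(ω ^ u - 1)(ω ^ v - 1) g(ω) = 0`; having `n` roots, it vanishes, i.e.
`i ↦ c (i + v) - c i` is `u`-periodic. For such a `c ≥ 0`, the minimum `a i` of `c` over the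
coset `i + uℕ` is `u`-periodic and non-negative, and `c - a` is non-negative and `v`-periodic,
because shifting by `v` adds the same amount to every term of that minimum. Finally, a polynomial
of degree `< n` with `u`-periodic coefficients is `s * Φ_p(X ^ u)`, as
`Φ_p(X ^ u) = ∑_{k < p} X ^ (k u)`.
-/

open Polynomial Finset Function

theorem Function.Periodic.sum_range_comp_add {M : Type*} [AddCommMonoid M] {f : ℕ → M} {n : ℕ}
    (hf : Periodic f n) (m : ℕ) : ∑ i ∈ range n, f (i + m) = ∑ i ∈ range n, f i := by
  induction m with
  | zero => rfl
  | succ m ih =>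
    rw [← ih]
    rcases n with _ | k
    · rfl
    · have hwrap : f (k + (m + 1)) = f (0 + m) := by
        rw [← hf (0 + m)]; congr 1; ring
      rw [sum_range_succ, sum_range_succ' (fun i => f (i + m)), hwrap]
      simp only [add_assoc, add_comm 1 m]

theorem Polynomial.coeff_sum_C_mul_X_pow {R : Type*} [Semiring R] (a : ℕ → R) (s : Finset ℕ)
    (j : ℕ) : (∑ i ∈ s, C (a i) * X ^ i).coeff j = if j ∈ s then a j else 0 := by
  simp only [finsetSum_coeff, coeff_C_mul_X_pow, sum_ite_eq]

theorem Polynomial.coeff_sum_C_mul_X_pow_nonneg {R : Type*} [Semiring R] [PartialOrder R]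
    {a : ℕ → R} (ha : 0 ≤ a) (s : Finset ℕ) (j : ℕ) :
    0 ≤ (∑ i ∈ s, C (a i) * X ^ i).coeff j := by
  rw [coeff_sum_C_mul_X_pow]
  split_ifs
  exacts [ha j, le_rfl]

theorem Polynomial.sum_range_mul_C_mul_X_pow_of_periodic {R : Type*} [Semiring R] {a : ℕ → R}
    {u : ℕ} (ha : Periodic a u) (k : ℕ) :
    ∑ i ∈ range (u * k), C (a i) * X ^ i =
      (∑ i ∈ range u, C (a i) * X ^ i) * ∑ j ∈ range k, (X ^ u) ^ j := by
  induction k with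
  | zero => simp
  | succ k ih =>
    rw [mul_add_one, Finset.sum_range_add, ih, sum_range_succ, mul_add, ← pow_mul,
      Finset.sum_mul _ _ (X ^ (u * k))]
    congr 1
    refine Finset.sum_congr rfl fun i _ => ?_
    have hper : a (i + k * u) = a i := by simpa using ha.nat_mul k i
    rw [add_comm (u * k) i, mul_comm u k, hper, pow_add, mul_assoc]

theorem Polynomial.sum_range_mul_C_mul_X_pow_of_periodic_eq_mul_cyclotomic_comp {R : Type*}
    [Ring R] {a : ℕ → R} {u p : ℕ} [Fact p.Prime] (ha : Periodic a u) :
    ∑ i ∈ range (u * p), C (a i) * X ^ i =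
      (∑ i ∈ range u, C (a i) * X ^ i) * (cyclotomic p R).comp (X ^ u) := by
  simp only [sum_range_mul_C_mul_X_pow_of_periodic ha, cyclotomic_prime, Polynomial.sum_comp,
    X_pow_comp]

theorem exists_eq_periodic_add_periodic_of_nonneg {G : Type*} [ConditionallyCompleteLinearOrder G]
    [AddCommGroup G] [IsOrderedAddMonoid G] {c : ℕ → G} {u v k : ℕ} (hk : 0 < k)
    (hc : Periodic c (k * u)) (hcv : Periodic (fun i => c (i + v) - c i) u) (hc0 : 0 ≤ c) :
    ∃ a b : ℕ → G, Periodic a u ∧ Periodic b v ∧ 0 ≤ a ∧ 0 ≤ b ∧ c = a + b := by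
  set a : ℕ → G := fun i => ⨅ j : ℕ, c (i + j * u) with ha
  have hbdd : ∀ i, BddBelow (Set.range fun j => c (i + j * u)) :=
    fun i => ⟨0, by rintro _ ⟨j, rfl⟩; exact hc0 _⟩
  have ha_le : ∀ i j, a i ≤ c (i + j * u) := fun i j => ciInf_le (hbdd i) j
  have ha_per : Periodic a u := by
    intro i
    obtain ⟨k, rfl⟩ := Nat.exists_eq_add_one.2 hk
    refine le_antisymm (le_ciInf fun j => ?_) (le_ciInf fun j => ?_)
    · calc a (i + u) ≤ c (i + u + (j + k) * u) := ha_le _ _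
        _ = c (i + j * u + (k + 1) * u) := by ring_nf
        _ = c (i + j * u) := hc _
    · calc a i ≤ c (i + (j + 1) * u) := ha_le _ _
        _ = c (i + u + j * u) := by ring_nf
  have ha_shift : ∀ i, a (i + v) = a i + (c (i + v) - c i) := by
    intro i
    have hterm : ∀ j, c (i + v + j * u) = c (i + j * u) + (c (i + v) - c i) := fun j => by
      have := hcv.nat_mul j i
      simp only [Nat.cast_id, add_right_comm i v] at this ⊢
      exact eq_add_of_sub_eq' this
    simp only [ha, hterm]
    exact ((OrderIso.addRight _).map_ciInf (hbdd i)).symm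
  refine ⟨a, c - a, ha_per, fun i => ?_, fun i => le_ciInf fun j => hc0 (i + j * u),
    fun i => sub_nonneg.2 (by simpa using ha_le i 0), (add_sub_cancel a c).symm⟩
  simp only [Pi.sub_apply, ha_shift]
  abel

theorem Nat.exists_prime_dvd_and_dvd_div_of_dvd_of_ne {d n : ℕ} (hd : d ∣ n) (hdn : d ≠ n) :
    ∃ r, r.Prime ∧ r ∣ n ∧ d ∣ n / r := by
  obtain ⟨e, rfl⟩ := hd
  obtain ⟨r, hr, f, rfl⟩ := Nat.exists_prime_and_dvd (n := e) (by rintro rfl; simp at hdn)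
  refine ⟨r, hr, dvd_mul_of_dvd_right (dvd_mul_right r f) d, ?_⟩
  rw [mul_left_comm, Nat.mul_div_cancel_left _ hr.pos]
  exact dvd_mul_right d f

theorem Nat.Prime.eq_or_eq_of_dvd_pow_mul_pow {p q r α β : ℕ} (hr : r.Prime) (hp : p.Prime)
    (hq : q.Prime) (h : r ∣ p ^ α * q ^ β) : r = p ∨ r = q := by
  rcases hr.dvd_mul.1 h with h | h
  · exact .inl ((prime_dvd_prime_iff_eq hr hp).1 (hr.dvd_of_dvd_pow h))
  · exact .inr ((prime_dvd_prime_iff_eq hr hq).1 (hr.dvd_of_dvd_pow h))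

theorem IsPrimitiveRoot.or_pow_div_eq_one {M : Type*} [CommMonoid M] {n p q : ℕ}
    (hprimes : ∀ r, r.Prime → r ∣ n → r = p ∨ r = q) {ω : M} (hω : ω ^ n = 1) :
    IsPrimitiveRoot ω n ∨ ω ^ (n / p) = 1 ∨ ω ^ (n / q) = 1 := by
  have hord : orderOf ω ∣ n := orderOf_dvd_of_pow_eq_one hω
  by_cases hn : orderOf ω = n
  · exact .inl (hn ▸ IsPrimitiveRoot.orderOf ω)
  obtain ⟨r, hr, hrn, hdvd⟩ := Nat.exists_prime_dvd_and_dvd_div_of_dvd_of_ne hord hn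
  rcases hprimes r hr hrn with rfl | rfl
  · exact .inr (.inl (orderOf_dvd_iff_pow_eq_one.1 hdvd))
  · exact .inr (.inr (orderOf_dvd_iff_pow_eq_one.1 hdvd))

theorem IsPrimitiveRoot.eq_zero_of_sum_mul_pow_eq_zero {R : Type*} [CommRing R] [IsDomain R]
    {n : ℕ} {ζ : R} (hζ : IsPrimitiveRoot ζ n) {f : ℕ → R}
    (h : ∀ ω : R, ω ^ n = 1 → ∑ i ∈ range n, f i * ω ^ i = 0) {i : ℕ} (hi : i < n) :
    f i = 0 := by
  set P : R[X] := ∑ j ∈ range n, C (f j) * X ^ j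
  have hdeg : P.natDegree < n :=
    (natDegree_sum_le_of_forall_le _ _ fun j hj => (natDegree_C_mul_X_pow_le _ _).trans
      (Nat.le_sub_one_of_lt (mem_range.1 hj))).trans_lt (by omega)
  have hP : P = 0 := by
    refine eq_zero_of_natDegree_lt_card_of_eval_eq_zero P (f := fun k : Fin n => ζ ^ (k : ℕ))
      (fun k l hkl => Fin.ext (hζ.pow_inj k.2 l.2 hkl)) (fun k => ?_) (by simpa using hdeg)
    simp only [P, eval_finsetSum, eval_mul, eval_C, eval_pow, eval_X]
    exact h _ (by rw [← pow_mul, mul_comm, pow_mul, hζ.pow_eq_one, one_pow])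
  simpa [P, coeff_sum_C_mul_X_pow, hi] using congrArg (coeff · i) hP

theorem Polynomial.pow_mul_sum_coeff_add_mod_smul_eq_aeval {R S : Type*} [CommSemiring R]
    [CommSemiring S] [Algebra R S] {p : R[X]} {n : ℕ} (hp : p.natDegree < n) {ω : S}
    (hω : ω ^ n = 1) (m : ℕ) :
    ω ^ m * ∑ i ∈ range n, p.coeff ((i + m) % n) • ω ^ i = aeval ω p := by
  have hper : Periodic (fun i => p.coeff (i % n) • ω ^ i) n := fun i => by
    simp only [Nat.add_mod_right, pow_add, hω, mul_one]
  calc ω ^ m * ∑ i ∈ range n, p.coeff ((i + m) % n) • ω ^ i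
      = ∑ i ∈ range n, p.coeff ((i + m) % n) • ω ^ (i + m) := by
        rw [mul_sum]
        exact Finset.sum_congr rfl fun i _ => by rw [pow_add, mul_smul_comm, mul_comm]
    _ = ∑ i ∈ range n, p.coeff (i % n) • ω ^ i := hper.sum_range_comp_add m
    _ = aeval ω p := by
        rw [aeval_eq_sum_range' hp]
        exact Finset.sum_congr rfl fun i hi => by rw [Nat.mod_eq_of_lt (mem_range.1 hi)]

theorem Polynomial.periodic_coeff_mod_add_sub_coeff_mod {n u v : ℕ} {g : ℤ[X]}
    (hg : g.natDegree < n)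
    (h : ∀ ω : ℂ, ω ^ n = 1 → aeval ω g = 0 ∨ ω ^ u = 1 ∨ ω ^ v = 1) :
    Periodic (fun i => g.coeff ((i + v) % n) - g.coeff (i % n)) u := by
  have hn : n ≠ 0 := by omega
  set c : ℕ → ℂ := fun i => (g.coeff (i % n) : ℂ)
  have hc : Periodic c n := fun i => by simp [c]
  have hshift : ∀ ω : ℂ, ω ^ n = 1 → ∀ m,
      ω ^ m * ∑ i ∈ range n, c (i + m) * ω ^ i = aeval ω g := fun ω hω m => by
    simpa [c, zsmul_eq_mul] using pow_mul_sum_coeff_add_mod_smul_eq_aeval hg hω m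
  have hsum : ∀ ω : ℂ, ω ^ n = 1 →
      ∑ i ∈ range n, (c i - c (i + u) - c (i + v) + c (i + (u + v))) * ω ^ i = 0 := by
    intro ω hω
    have hω0 : ω ≠ 0 := by rintro rfl; simp [hn] at hω
    have hfactor : (ω ^ u - 1) * (ω ^ v - 1) * aeval ω g = 0 := by
      rcases h ω hω with hg0 | hu1 | hv1
      · rw [hg0, mul_zero]
      · rw [hu1, sub_self, zero_mul, zero_mul]
      · rw [hv1, sub_self, mul_zero, zero_mul]
    refine mul_right_injective₀ (pow_ne_zero (u + v) hω0) ?_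
    simp only [sub_mul, add_mul, sum_add_distrib, sum_sub_distrib, mul_zero]
    have h0 := hshift ω hω 0
    simp only [add_zero, pow_zero, one_mul] at h0
    linear_combination ω ^ (u + v) * h0 - ω ^ v * hshift ω hω u - ω ^ u * hshift ω hω v
      + hshift ω hω (u + v) + hfactor
  have hD : Periodic (fun i => c i - c (i + u) - c (i + v) + c (i + (u + v))) n := fun i => by
    simp only [add_right_comm i n, hc _]
  intro i
  have hDi := hD.map_mod_nat i ▸ (Complex.isPrimitiveRoot_exp n hn).eq_zero_of_sum_mul_pow_eq_zero
    hsum (Nat.mod_lt i (Nat.pos_of_ne_zero hn))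
  have hcoeff : (g.coeff ((i + (u + v)) % n) - g.coeff ((i + u) % n) : ℂ) =
      g.coeff ((i + v) % n) - g.coeff (i % n) := by linear_combination hDi
  simp only [add_right_comm i u v, ← add_assoc] at hcoeff ⊢
  exact_mod_cast hcoeff

theorem nonneg_multiple_of_cyclotomic_two_primes_general (p q α β : ℕ) (hp : p.Prime)
    (hq : q.Prime) (hα : 1 ≤ α) (hβ : 1 ≤ β)
    (n : ℕ) (hn : n = p ^ α * q ^ β) (g : ℤ[X])
    (hdeg : g.natDegree = n - 1) (hpos : ∀ i, 0 ≤ g.coeff i)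
    (hdvd : cyclotomic n ℤ ∣ g) :
    ∃ s₁ s₂ : ℤ[X], (∀ i, 0 ≤ s₁.coeff i) ∧ (∀ i, 0 ≤ s₂.coeff i) ∧
      g = s₁ * (cyclotomic p ℤ).comp (X ^ (n / p)) +
          s₂ * (cyclotomic q ℤ).comp (X ^ (n / q)) := by
  have : Fact p.Prime := ⟨hp⟩
  have : Fact q.Prime := ⟨hq⟩
  have hn0 : 0 < n := hn ▸ Nat.mul_pos (pow_pos hp.pos α) (pow_pos hq.pos β)
  have hg : g.natDegree < n := by omega
  have hnp : n / p * p = n := Nat.div_mul_cancel (hn ▸ (dvd_pow_self p (by omega)).mul_right _)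
  have hnq : n / q * q = n := Nat.div_mul_cancel (hn ▸ (dvd_pow_self q (by omega)).mul_left _)
  have hprimes : ∀ r, r.Prime → r ∣ n → r = p ∨ r = q :=
    fun r hr hrn => hr.eq_or_eq_of_dvd_pow_mul_pow hp hq (hn ▸ hrn)
  have hroots : ∀ ω : ℂ, ω ^ n = 1 →
      aeval ω g = 0 ∨ ω ^ (n / p) = 1 ∨ ω ^ (n / q) = 1 := by
    intro ω hω
    rcases IsPrimitiveRoot.or_pow_div_eq_one hprimes hω with hprim | hpow
    · refine .inl (aeval_eq_zero_of_dvd_aeval_eq_zero hdvd ?_)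
      rw [aeval_def, eval₂_eq_eval_map, map_cyclotomic]
      exact hprim.isRoot_cyclotomic hn0
    · exact .inr hpow
  obtain ⟨a, b, ha, hb, ha0, hb0, hab⟩ :=
    exists_eq_periodic_add_periodic_of_nonneg (c := fun i => g.coeff (i % n)) hp.pos
      (by rw [mul_comm, hnp]; exact fun i => by simp)
      (periodic_coeff_mod_add_sub_coeff_mod hg hroots) (fun i => hpos _)
  refine ⟨∑ i ∈ range (n / p), C (a i) * X ^ i, ∑ i ∈ range (n / q), C (b i) * X ^ i,
    coeff_sum_C_mul_X_pow_nonneg ha0 _, coeff_sum_C_mul_X_pow_nonneg hb0 _, ?_⟩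
  rw [← sum_range_mul_C_mul_X_pow_of_periodic_eq_mul_cyclotomic_comp ha,
    ← sum_range_mul_C_mul_X_pow_of_periodic_eq_mul_cyclotomic_comp hb, hnp, hnq,
    ← sum_add_distrib, as_sum_range_C_mul_X_pow' g hg]
  refine Finset.sum_congr rfl fun i hi => ?_
  rw [← add_mul, ← C_add, ← Pi.add_apply a b, ← hab]
  simp only [Nat.mod_eq_of_lt (mem_range.1 hi)]

theorem nonneg_multiple_of_cyclotomic_two_primes (p q α β : ℕ) (hp : p.Prime)
    (hq : q.Prime) (hpq : p ≠ q) (hα : 1 ≤ α) (hβ : 1 ≤ β)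
    (n : ℕ) (hn : n = p ^ α * q ^ β) (g : ℤ[X])
    (hdeg : g.natDegree = n - 1) (hpos : ∀ i, 0 ≤ g.coeff i)
    (hdvd : cyclotomic n ℤ ∣ g) :
    ∃ s₁ s₂ : ℤ[X], (∀ i, 0 ≤ s₁.coeff i) ∧ (∀ i, 0 ≤ s₂.coeff i) ∧
      g = s₁ * (cyclotomic p ℤ).comp (X ^ (n / p)) +
          s₂ * (cyclotomic q ℤ).comp (X ^ (n / q)) :=
  nonneg_multiple_of_cyclotomic_two_primes_general p q α β hp hq hα hβ n hn g hdeg hpos hdvd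
end

section
/- Let n = p^α with p prime and α ≥ 1, X a finite set, and f : X → ℤ/nℤ. Let K_p be the subgroup of ℤ/nℤ generated by n/p. Then ∑_{s∈X} exp(2πi f(s)/n) = 0 if and only if every coset of K_p is evenly covered by f, i.e. for each coset C of K_p, the fibers |f⁻¹(c)| are equal for all c ∈ C. -/
open Finset Polynomial

private lemma sum_range_mul_aux {M : Type*} [AddCommMonoid M] (g : ℕ → M) (k m : ℕ) :
    ∑ t ∈ Finset.range (k * m), g t
      = ∑ i ∈ Finset.range k, ∑ r ∈ Finset.range m, g (i * m + r) := by
  induction k with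
  | zero => simp
  | succ k ih =>
    rw [Finset.sum_range_succ, ← ih, Nat.succ_mul, Finset.sum_range_add]

theorem balanced_iff_evenly_covered_prime_pow (p α : ℕ) (hp : p.Prime)
    (hα : 1 ≤ α) (n : ℕ) (hn : n = p ^ α)
    (X : Type*) [Fintype X] [DecidableEq X] (f : X → ZMod n) :
    (∑ s : X, Complex.exp (2 * Real.pi * Complex.I * (f s).val / n)) = 0 ↔
      ∀ x y : ZMod n,
        x - y ∈ AddSubgroup.zmultiples ((n / p : ℕ) : ZMod n) →
          (Finset.univ.filter (fun s => f s = x)).card =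
            (Finset.univ.filter (fun s => f s = y)).card := by
  have hp1 : 1 < p := hp.one_lt
  set m := p ^ (α - 1) with hm
  have hnm : n = p * m := by
    rw [hn, hm, ← pow_succ']
    congr 1
    omega
  have hm0 : 0 < m := pow_pos hp.pos _
  have hn0 : 0 < n := by rw [hnm]; positivity
  haveI : NeZero n := ⟨hn0.ne'⟩
  have hmn : m < n := by
    rw [hnm]; exact lt_mul_left hm0 hp1
  have hnp : n / p = m := by rw [hnm]; exact Nat.mul_div_cancel_left m hp.pos
  set ω : ℂ := Complex.exp (2 * Real.pi * Complex.I / n) with hω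
  have hprim : IsPrimitiveRoot ω n := Complex.isPrimitiveRoot_exp n hn0.ne'
  set c : ZMod n → ℕ := fun j => (Finset.univ.filter (fun s => f s = j)).card with hc
  -- rewrite the sum
  have hexp : ∀ s : X, Complex.exp (2 * Real.pi * Complex.I * (f s).val / n)
      = ω ^ (f s).val := by
    intro s
    rw [hω, ← Complex.exp_nat_mul]
    ring_nf
  have hLHS : (∑ s : X, Complex.exp (2 * Real.pi * Complex.I * (f s).val / n))
      = ∑ j : ZMod n, (c j : ℂ) * ω ^ j.val := by
    rw [Finset.sum_congr rfl (fun s _ => hexp s),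
      ← Finset.sum_fiberwise' Finset.univ f (fun j => ω ^ j.val)]
    refine Finset.sum_congr rfl fun j _ => ?_
    rw [Finset.sum_const, nsmul_eq_mul, hc]
  -- coset characterization
  have hdvdmn : m ∣ n := ⟨p, by rw [hnm]; ring⟩
  have hcoset : ∀ x y : ZMod n,
      (x - y ∈ AddSubgroup.zmultiples ((m : ℕ) : ZMod n)) ↔ x.val % m = y.val % m := by
    intro x y
    constructor
    · rintro hmem
      obtain ⟨z, hz⟩ := AddSubgroup.mem_zmultiples_iff.mp hmem
      have hz' : (z : ZMod n) * (m : ZMod n) = x - y := by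
        rw [← hz, zsmul_eq_mul]
      have := congrArg (ZMod.castHom hdvdmn (ZMod m)) hz'
      simp only [map_mul, map_sub, map_natCast, map_intCast, ZMod.natCast_self,
        mul_zero] at this
      have hx : (ZMod.castHom hdvdmn (ZMod m)) x = ((x.val : ℕ) : ZMod m) := by
        conv_lhs => rw [← ZMod.natCast_rightInverse x]
        rw [map_natCast]
      have hy : (ZMod.castHom hdvdmn (ZMod m)) y = ((y.val : ℕ) : ZMod m) := by
        conv_lhs => rw [← ZMod.natCast_rightInverse y]
        rw [map_natCast]
      rw [hx, hy] at this
      have h0 : ((x.val : ℕ) : ZMod m) = ((y.val : ℕ) : ZMod m) := by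
        linear_combination -this
      rwa [ZMod.natCast_eq_natCast_iff'] at h0
    · intro hmod
      have hdvd : (m : ℤ) ∣ (x.val : ℤ) - (y.val : ℤ) := by
        have : x.val ≡ y.val [MOD m] := hmod
        exact (Nat.modEq_iff_dvd.mp this.symm)
      obtain ⟨z, hz⟩ := hdvd
      refine AddSubgroup.mem_zmultiples_iff.mpr ⟨z, ?_⟩
      have hxv : ((x.val : ℕ) : ZMod n) = x := ZMod.natCast_rightInverse x
      have hyv : ((y.val : ℕ) : ZMod n) = y := ZMod.natCast_rightInverse y
      rw [zsmul_eq_mul, ← hxv, ← hyv]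
      have h2 : (((x.val : ℤ) - (y.val : ℤ) : ℤ) : ZMod n) = (((m : ℤ) * z : ℤ) : ZMod n) := by
        rw [hz]
      push_cast at h2
      rw [h2]
      ring
  rw [hLHS, hnp]
  have hfilter : ∀ x : ZMod n, (Finset.univ.filter (fun s => f s = x)).card = c x :=
    fun _ => rfl
  constructor
  · -- hard direction
    intro hS x y hxy
    rw [hfilter, hfilter, hc]
    have hmod : x.val % m = y.val % m := (hcoset x y).mp hxy
    -- polynomial setup
    set P : ℚ[X] := ∑ j : ZMod n, Polynomial.C ((c j : ℚ)) * Polynomial.X ^ j.val with hP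
    have hPcoeff : ∀ t : ℕ, P.coeff t = if t < n then (c ((t : ℕ) : ZMod n) : ℚ) else 0 := by
      intro t
      rw [hP, Polynomial.finset_sum_coeff]
      simp only [Polynomial.coeff_C_mul, Polynomial.coeff_X_pow]
      by_cases ht : t < n
      · rw [if_pos ht, Finset.sum_eq_single ((t : ℕ) : ZMod n)]
        · rw [ZMod.val_cast_of_lt ht, if_pos rfl, mul_one]
        · intro j _ hj
          rw [if_neg, mul_zero]
          intro h
          exact hj (by rw [h]; exact (ZMod.natCast_rightInverse j).symm)
        · simp
      · rw [if_neg ht]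
        refine Finset.sum_eq_zero fun j _ => ?_
        rw [if_neg, mul_zero]
        intro h
        exact ht (h ▸ ZMod.val_lt j)
    have haev : Polynomial.aeval ω P = 0 := by
      rw [hP, map_sum]
      simp only [map_mul, map_pow, Polynomial.aeval_C, Polynomial.aeval_X]
      rw [← hS]
      refine Finset.sum_congr rfl fun j _ => ?_
      norm_num
    have hmin : Polynomial.cyclotomic n ℚ = minpoly ℚ ω :=
      Polynomial.cyclotomic_eq_minpoly_rat hprim hn0
    have hdvd : Polynomial.cyclotomic n ℚ ∣ P := hmin ▸ minpoly.dvd ℚ ω haev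
    obtain ⟨Q, hQ⟩ := hdvd
    have hΦ : Polynomial.cyclotomic n ℚ = ∑ i ∈ Finset.range p, (Polynomial.X ^ m) ^ i := by
      rw [hn, show α = (α - 1) + 1 from (Nat.succ_pred_eq_of_pos hα).symm]
      exact Polynomial.cyclotomic_prime_pow_eq_geom_sum hp
    -- degree bounds
    have hPdeg : P.natDegree ≤ n - 1 := by
      rw [Polynomial.natDegree_le_iff_coeff_eq_zero]
      intro N hN
      rw [hPcoeff, if_neg (by omega)]
    have hQcoeff0 : ∀ j, m ≤ j → Q.coeff j = 0 := by
      intro j hj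
      by_cases hQ0 : Q = 0
      · simp [hQ0]
      have hdegmul : P.natDegree = (Polynomial.cyclotomic n ℚ).natDegree + Q.natDegree :=
        hQ ▸ Polynomial.natDegree_mul (Polynomial.cyclotomic_ne_zero n ℚ) hQ0
      have hΦdeg : (Polynomial.cyclotomic n ℚ).natDegree = m * (p - 1) := by
        rw [Polynomial.natDegree_cyclotomic, hn, Nat.totient_prime_pow hp hα]
      have hQdeg : Q.natDegree < m := by
        have h1 : m * (p - 1) + Q.natDegree ≤ n - 1 := by
          rw [← hΦdeg, ← hdegmul]; exact hPdeg
        have h2 : m * (p - 1) + m = n := by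
          have hp' : p - 1 + 1 = p := Nat.succ_pred_eq_of_pos hp.pos
          calc m * (p - 1) + m = m * (p - 1 + 1) := by ring
          _ = m * p := by rw [hp']
          _ = n := by rw [hnm]; ring
        omega
      exact Polynomial.coeff_eq_zero_of_natDegree_lt (lt_of_lt_of_le hQdeg hj)
    -- coefficient extraction: P.coeff (k*m+r) = Q.coeff r
    have hPQ : ∀ k < p, ∀ r < m, P.coeff (k * m + r) = Q.coeff r := by
      intro k hk r hr
      rw [hQ, hΦ, Finset.sum_mul, Polynomial.finset_sum_coeff]
      have hterm : ∀ i ∈ Finset.range p,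
          ((Polynomial.X ^ m) ^ i * Q).coeff (k * m + r)
            = if m * i ≤ k * m + r then Q.coeff (k * m + r - m * i) else 0 := by
        intro i _
        rw [← pow_mul, (Polynomial.commute_X_pow Q (m * i)).eq, Polynomial.coeff_mul_X_pow']
      rw [Finset.sum_congr rfl hterm, Finset.sum_eq_single k]
      · rw [if_pos (by nlinarith), show k * m + r - m * k = r by rw [mul_comm]; omega]
      · intro i hi hik
        rcases lt_or_gt_of_ne hik with h | h
        · rw [if_pos (by nlinarith)]
          apply hQcoeff0
          have : m * i + m ≤ k * m := by
            calc m * i + m = (i + 1) * m := by ring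
            _ ≤ k * m := Nat.mul_le_mul_right m h
          omega
        · rw [if_neg]
          have h4 : (k + 1) * m ≤ m * i := by
            rw [mul_comm]; exact Nat.mul_le_mul_left m h
          have h5 : (k + 1) * m = k * m + m := by ring
          omega
      · intro h
        exact absurd (Finset.mem_range.mpr hk) h
    -- finish
    have hxval : x.val = x.val / m * m + x.val % m := by
      rw [mul_comm]; exact (Nat.div_add_mod x.val m).symm
    have hyval : y.val = y.val / m * m + y.val % m := by
      rw [mul_comm]; exact (Nat.div_add_mod y.val m).symm
    have hxk : x.val / m < p := by
      have h : x.val < m * p := lt_of_lt_of_eq (ZMod.val_lt x) (by rw [hnm]; ring)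
      exact Nat.div_lt_of_lt_mul h
    have hyk : y.val / m < p := by
      have h : y.val < m * p := lt_of_lt_of_eq (ZMod.val_lt y) (by rw [hnm]; ring)
      exact Nat.div_lt_of_lt_mul h
    have hcx : (c x : ℚ) = Q.coeff (x.val % m) := by
      have h1 := hPcoeff x.val
      rw [if_pos (ZMod.val_lt x), ZMod.natCast_rightInverse x] at h1
      have h2 := hPQ _ hxk _ (Nat.mod_lt x.val hm0)
      rw [← hxval] at h2
      rw [← h1, h2]
    have hcy : (c y : ℚ) = Q.coeff (y.val % m) := by
      have h1 := hPcoeff y.val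
      rw [if_pos (ZMod.val_lt y), ZMod.natCast_rightInverse y] at h1
      have h2 := hPQ _ hyk _ (Nat.mod_lt y.val hm0)
      rw [← hyval] at h2
      rw [← h1, h2]
    have : (c x : ℚ) = (c y : ℚ) := by rw [hcx, hcy, hmod]
    exact_mod_cast this
  · -- easy direction
    intro H
    have Hc : ∀ k < p, ∀ r < m, c ((k * m + r : ℕ) : ZMod n) = c ((r : ℕ) : ZMod n) := by
      intro k hk r hr
      have hmem : ((k * m + r : ℕ) : ZMod n) - ((r : ℕ) : ZMod n)
          ∈ AddSubgroup.zmultiples ((m : ℕ) : ZMod n) := by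
        refine AddSubgroup.mem_zmultiples_iff.mpr ⟨(k : ℤ), ?_⟩
        rw [zsmul_eq_mul]
        push_cast
        ring
      have := H _ _ hmem
      rw [hfilter, hfilter] at this
      exact this
    -- reindex
    have hsum1 : (∑ j : ZMod n, (c j : ℂ) * ω ^ j.val)
        = ∑ t ∈ Finset.range n, (c ((t : ℕ) : ZMod n) : ℂ) * ω ^ t := by
      refine Finset.sum_nbij' (fun j => j.val) (fun t => ((t : ℕ) : ZMod n)) ?_ ?_ ?_ ?_ ?_
      · intro j _; exact Finset.mem_range.mpr (ZMod.val_lt j)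
      · intro t _; exact Finset.mem_univ _
      · intro j _; exact ZMod.natCast_rightInverse j
      · intro t ht; exact ZMod.val_cast_of_lt (Finset.mem_range.mp ht)
      · intro j _
        exact congrArg (fun z => ((c z : ℂ) * ω ^ j.val)) (ZMod.natCast_rightInverse j).symm
    have hsplit := sum_range_mul_aux (fun t => (c ((t : ℕ) : ZMod n) : ℂ) * ω ^ t) p m
    rw [← hnm] at hsplit
    rw [hsum1, hsplit]
    have hinner : ∀ k ∈ Finset.range p,
        (∑ r ∈ Finset.range m, (c (((k * m + r : ℕ)) : ZMod n) : ℂ) * ω ^ (k * m + r))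
          = (ω ^ m) ^ k * ∑ r ∈ Finset.range m, (c ((r : ℕ) : ZMod n) : ℂ) * ω ^ r := by
      intro k hk
      rw [Finset.mul_sum]
      refine Finset.sum_congr rfl fun r hr => ?_
      rw [Hc k (Finset.mem_range.mp hk) r (Finset.mem_range.mp hr)]
      ring
    rw [Finset.sum_congr rfl hinner, ← Finset.sum_mul]
    have hζ : IsPrimitiveRoot (ω ^ m) p := hprim.pow hn0 (by rw [hnm, mul_comm])
    rw [hζ.geom_sum_eq_zero hp1, zero_mul]
end

section
/- Let p be prime and f : ℤ/pℤ → ℤ/pℤ. Then ∑_{s ∈ ℤ/pℤ} exp(2πi f(s)/p) = 0 if and only if f is a bijection. -/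
open Polynomial Finset

lemma sum_val_eq {M : Type*} [AddCommMonoid M] (p : ℕ) [NeZero p] (g : ℕ → M) :
    ∑ k : ZMod p, g k.val = ∑ i ∈ Finset.range p, g i := by
  refine Finset.sum_nbij' (fun k => k.val) (fun i => (i : ZMod p)) ?_ ?_ ?_ ?_ ?_
  · intro k _; simpa using ZMod.val_lt k
  · intros; simp
  · intro k _; simp [ZMod.natCast_val, ZMod.cast_id]
  · intro i hi; simp at hi; exact ZMod.val_cast_of_lt hi
  · intros; rfl

lemma key (p : ℕ) (hp : p.Prime) [NeZero p] {ζ : ℂ} (hζ : IsPrimitiveRoot ζ p)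
    (c : ZMod p → ℕ) (hsum : ∑ k, c k = p)
    (h : ∑ k : ZMod p, (c k : ℂ) * ζ ^ k.val = 0) : ∀ k, c k = 1 := by
  haveI : Fact p.Prime := ⟨hp⟩
  have hgeom : ∑ k : ZMod p, ζ ^ k.val = 0 := by
    rw [sum_val_eq p (fun i => ζ ^ i)]
    exact hζ.geom_sum_eq_zero hp.one_lt
  set Q : ℚ[X] := ∑ k : ZMod p, C ((c k : ℚ) - 1) * X ^ k.val with hQ
  have hcoeff : ∀ j : ZMod p, Q.coeff j.val = (c j : ℚ) - 1 := by
    intro j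
    rw [hQ, finset_sum_coeff]
    rw [Finset.sum_eq_single j]
    · rw [coeff_C_mul, coeff_X_pow, if_pos rfl, mul_one]
    · intro k _ hkj
      rw [coeff_C_mul, coeff_X_pow, if_neg, mul_zero]
      exact fun hv => hkj (ZMod.val_injective p hv.symm)
    · simp
  have haev : aeval ζ Q = 0 := by
    have : aeval ζ Q = ∑ k : ZMod p, ((c k : ℂ) - 1) * ζ ^ k.val := by
      rw [hQ, map_sum]
      simp only [map_mul, map_pow, aeval_C, aeval_X, map_sub, map_one, map_natCast]
    rw [this]
    simp only [sub_mul, one_mul, Finset.sum_sub_distrib, h, hgeom, sub_zero]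
  have hdvd : cyclotomic p ℚ ∣ Q := by
    rw [cyclotomic_eq_minpoly_rat hζ hp.pos]
    exact minpoly.dvd ℚ ζ haev
  have hdegQ : Q.natDegree ≤ p - 1 := by
    refine natDegree_sum_le_of_forall_le _ _ (fun k _ => ?_)
    refine (natDegree_C_mul_le _ _).trans ?_
    simp only [natDegree_X_pow]
    have := ZMod.val_lt k
    omega
  have hQ0 : Q = 0 := by
    by_contra hQ0
    obtain ⟨R, hR⟩ := hdvd
    have hΦ : (cyclotomic p ℚ).natDegree = p - 1 := by
      rw [natDegree_cyclotomic, Nat.totient_prime hp]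
    have hRne : R ≠ 0 := by
      rintro rfl; rw [mul_zero] at hR; exact hQ0 hR
    have hdeg : Q.natDegree = (p - 1) + R.natDegree := by
      rw [hR, natDegree_mul (cyclotomic_ne_zero p ℚ) hRne, hΦ]
    have hRdeg : R.natDegree = 0 := by omega
    obtain ⟨a, ha⟩ := natDegree_eq_zero.mp hRdeg
    have h1 : Q.eval 1 = 0 := by
      rw [hQ, eval_finset_sum]
      simp only [eval_mul, eval_C, eval_pow, eval_X, one_pow, mul_one]
      rw [Finset.sum_sub_distrib, Finset.sum_const, Finset.card_univ, ZMod.card,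
        ← Nat.cast_sum, hsum]
      simp
    have h2 : Q.eval 1 = p * a := by
      rw [hR, ← ha, eval_mul, eval_one_cyclotomic_prime, eval_C]
    have hpne : (p : ℚ) ≠ 0 := Nat.cast_ne_zero.mpr hp.pos.ne'
    have ha0 : a = 0 := by
      rw [h1] at h2
      rcases mul_eq_zero.mp h2.symm with h | h
      · exact absurd h hpne
      · exact h
    rw [ha0, map_zero] at ha
    exact hRne ha.symm
  intro k
  have := hcoeff k
  rw [hQ0, coeff_zero] at this
  have : (c k : ℚ) = 1 := by linarith
  exact_mod_cast this

theorem balanced_iff_bijective_prime (p : ℕ) (hp : p.Prime) [NeZero p]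
    (f : ZMod p → ZMod p) :
    (∑ s : ZMod p, Complex.exp (2 * Real.pi * Complex.I * (f s).val / p)) = 0 ↔
      Function.Bijective f := by
  set ζ : ℂ := Complex.exp (2 * Real.pi * Complex.I / p) with hζdef
  have hζ : IsPrimitiveRoot ζ p := Complex.isPrimitiveRoot_exp p (NeZero.ne p)
  have hexp : ∀ s : ZMod p,
      Complex.exp (2 * Real.pi * Complex.I * (f s).val / p) = ζ ^ (f s).val := by
    intro s
    rw [hζdef, ← Complex.exp_nat_mul]
    ring_nf
  simp only [hexp]
  have hgeom : ∑ k : ZMod p, ζ ^ k.val = 0 := by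
    rw [sum_val_eq p (fun i => ζ ^ i)]
    exact hζ.geom_sum_eq_zero hp.one_lt
  set c : ZMod p → ℕ := fun k => (univ.filter fun s => f s = k).card with hc
  have hfib : ∑ s : ZMod p, ζ ^ (f s).val = ∑ k : ZMod p, (c k : ℂ) * ζ ^ k.val := by
    rw [← Finset.sum_fiberwise univ f (fun s => ζ ^ (f s).val)]
    refine Finset.sum_congr rfl fun k _ => ?_
    rw [Finset.sum_congr rfl (fun s hs => ?_), Finset.sum_const, nsmul_eq_mul]
    simp only [Finset.mem_filter] at hs
    rw [hs.2]
  have hsum : ∑ k, c k = p := by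
    have := Finset.card_eq_sum_card_fiberwise (f := f) (s := univ) (t := univ)
      (fun x _ => Finset.mem_univ _)
    rw [Finset.card_univ, ZMod.card] at this
    exact this.symm
  rw [hfib]
  constructor
  · intro h
    have hone := key p hp hζ c hsum h
    have hinj : Function.Injective f := by
      intro a b hab
      have h1 : a ∈ univ.filter fun s => f s = f b := by simp [hab]
      have h2 : b ∈ univ.filter fun s => f s = f b := by simp
      exact Finset.card_le_one.mp (le_of_eq (hone (f b))) a h1 b h2
    exact Finite.injective_iff_bijective.mp hinj
  · intro hbij
    have hone : ∀ k, c k = 1 := by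
      intro k
      rw [hc]
      rw [Finset.card_eq_one]
      obtain ⟨s, hs⟩ := hbij.2 k
      refine ⟨s, ?_⟩
      ext t
      simp only [Finset.mem_filter, Finset.mem_univ, true_and, Finset.mem_singleton, ← hs]
      exact hbij.1.eq_iff
    simp only [hone, Nat.cast_one, one_mul]
    exact hgeom
end
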